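/- Let S ⊆ {1,…,m} be nonempty. Then rank(F^S) = 1 if and only if every two-element subset of S is critical and at least one one-element subset of S is non-critical. -/

import Mathlib

open Matrix

/-- The verification matrix `F := H (Hᴴ H)⁻¹ Hᴴ - Id`. -/
noncomputable def verif {m n : ℕ} (H : Matrix (Fin m) (Fin n) ℂ) :
    Matrix (Fin m) (Fin m) ℂ :=
  H * (Hᴴ * H)⁻¹ * Hᴴ - 1

/-- A set `S` of measurement (row) indices is critical if deleting the rows of `H`
with indices in `S` leaves a matrix of rank `< n`. -/
def IsCritical {m n : ℕ} (H : Matrix (Fin m) (Fin n) ℂ) (S : Finset (Fin m)) : Prop :=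
  (H.submatrix (fun i : {i : Fin m // i ∉ S} => (i : Fin m)) id).rank < n

/-- `F^S`: the submatrix of `F` formed by the columns with indices in `S`. -/
def colSub {m : ℕ} (F : Matrix (Fin m) (Fin m) ℂ) (S : Finset (Fin m)) :
    Matrix (Fin m) {j : Fin m // j ∈ S} ℂ :=
  F.submatrix id (fun j => (j : Fin m))

/-! `F = P - 1` where `P` is the orthogonal projection onto the column space of `H`, so
`ker F = range H`. Since `H` is injective, `T` is critical iff some nonzero vector of `range H`
is supported in `T`, i.e. iff the columns of `F` indexed by `T` are linearly dependent. A family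
of vectors spans a line iff one of them is nonzero and any two of them are dependent. -/

namespace Matrix

section Field

variable {K ι κ : Type*} [Field K] [Fintype κ]

theorem rank_eq_card_width_iff_mulVec_injective (A : Matrix ι κ K) :
    A.rank = Fintype.card κ ↔ Function.Injective A.mulVec := by
  have hrn := A.mulVecLin.finrank_range_add_finrank_ker
  rw [Module.finrank_fintype_fun_eq_card] at hrn
  rw [← coe_mulVecLin, ← LinearMap.ker_eq_bot, ← Submodule.finrank_eq_zero, Matrix.rank]
  omega

theorem not_linearIndepOn_col_iff [DecidableEq κ] (M : Matrix ι κ K) (T : Finset κ) :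
    ¬ LinearIndepOn K M.col T ↔ ∃ v ≠ 0, (∀ j ∉ T, v j = 0) ∧ M *ᵥ v = 0 := by
  have hsum : ∀ v : κ → K, (∀ j ∉ T, v j = 0) → M *ᵥ v = ∑ j ∈ T, v j • M.col j := by
    intro v hv
    rw [mulVec_eq_sum, ← Finset.sum_subset T.subset_univ fun j _ hj => by simp [hv j hj]]
    simp only [op_smul_eq_smul]
    rfl
  rw [not_linearIndepOn_finset_iff]
  constructor
  · rintro ⟨f, hf, i, hiT, hfi⟩
    set v : κ → K := fun j => if j ∈ T then f j else 0
    have hvT : ∀ j ∉ T, v j = 0 := fun j hj => if_neg hj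
    refine ⟨v, Function.ne_iff.mpr ⟨i, by simpa [v, hiT]⟩, hvT, ?_⟩
    rw [hsum v hvT, ← hf]
    exact Finset.sum_congr rfl fun j hj => by simp [v, hj]
  · rintro ⟨v, hv0, hvT, hMv⟩
    obtain ⟨i, hi⟩ := Function.ne_iff.mp hv0
    exact ⟨v, hsum v hvT ▸ hMv, i, by_contra fun h => hi (hvT i h), hi⟩

end Field

theorem isUnit_conjTranspose_mul_self {R ι κ : Type*} [Field R] [PartialOrder R] [StarRing R]
    [StarOrderedRing R] [Fintype ι] [Fintype κ] [DecidableEq κ] (A : Matrix ι κ R)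
    (hA : Function.Injective A.mulVec) : IsUnit (Aᴴ * A) := by
  rwa [← mulVec_injective_iff_isUnit, ← coe_mulVecLin, ← LinearMap.ker_eq_bot,
    ker_mulVecLin_conjTranspose_mul_self, LinearMap.ker_eq_bot, coe_mulVecLin]

end Matrix

section Span

open Module Submodule

variable {K V ι : Type*} [Field K] [AddCommGroup V] [Module K V]

theorem finrank_span_image_eq_one_iff (v : ι → V) (s : Finset ι) :
    finrank K (span K (v '' s)) = 1 ↔
      (∀ T ⊆ s, T.card = 2 → ¬ LinearIndepOn K v (T : Set ι)) ∧ ∃ i ∈ s, v i ≠ 0 := by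
  classical
  constructor
  · intro h
    have : FiniteDimensional K (span K (v '' s)) := Module.finite_of_finrank_eq_succ h
    refine ⟨fun T hTs hT hli => ?_, ?_⟩
    · have h2 : finrank K (span K (v '' T)) = 2 := by
        rw [Set.image_eq_range, finrank_span_eq_card hli]
        simpa using hT
      have := Submodule.finrank_mono
        (span_mono (R := K) (Set.image_mono (f := v) (Finset.coe_subset.mpr hTs)))
      omega
    · by_contra! h0
      have : span K (v '' s) = ⊥ := by
        rw [span_eq_bot]
        rintro _ ⟨i, hi, rfl⟩
        exact h0 i hi
      rw [this, finrank_bot] at h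
      exact zero_ne_one h
  · rintro ⟨hpair, i, his, hi⟩
    suffices span K (v '' s) = K ∙ v i by rw [this, finrank_span_singleton hi]
    refine le_antisymm (span_le.mpr ?_) (span_mono (by simpa using ⟨i, his, rfl⟩))
    rintro _ ⟨j, hjs, rfl⟩
    obtain rfl | hij := eq_or_ne i j
    · exact mem_span_singleton_self _
    have hdep := hpair {i, j} (Finset.insert_subset his (Finset.singleton_subset_iff.mpr hjs))
      (Finset.card_pair hij)
    rw [Finset.coe_pair, linearIndepOn_pair_iff v hij hi] at hdep
    exact mem_span_singleton.mpr (by simpa using hdep)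

end Span

section Verification

variable {m n : ℕ} {H : Matrix (Fin m) (Fin n) ℂ}

theorem isCritical_iff_exists_mulVec (T : Finset (Fin m)) :
    IsCritical H T ↔ ∃ x ≠ 0, ∀ i ∉ T, (H *ᵥ x) i = 0 := by
  set H' := H.submatrix (fun i : {i // i ∉ T} => (i : Fin m)) id
  have hH' : ∀ x, H' *ᵥ x = fun i : {i // i ∉ T} => (H *ᵥ x) i := fun x =>
    submatrix_mulVec_equiv H x _ (Equiv.refl _)
  have hrank : H'.rank < n ↔ ¬ Function.Injective H'.mulVec := by
    rw [← rank_eq_card_width_iff_mulVec_injective, Fintype.card_fin]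
    exact (H'.rank_le_card_width.trans_eq (Fintype.card_fin n)).lt_iff_ne
  show H'.rank < n ↔ _
  rw [hrank, ← coe_mulVecLin, injective_iff_map_eq_zero]
  simp [hH', funext_iff, and_comm]

variable (hH : H.rank = n)
include hH

theorem mulVec_injective_of_rank_eq : Function.Injective H.mulVec :=
  (rank_eq_card_width_iff_mulVec_injective H).mp (by rw [hH, Fintype.card_fin])

open ComplexOrder in
theorem verif_mul_self : verif H * H = 0 := by
  have hdet := (isUnit_iff_isUnit_det _).mp
    (isUnit_conjTranspose_mul_self H (mulVec_injective_of_rank_eq hH))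
  rw [verif, Matrix.sub_mul, Matrix.one_mul, Matrix.mul_assoc, Matrix.mul_assoc,
    nonsing_inv_mul _ hdet, Matrix.mul_one, sub_self]

theorem verif_mulVec_eq_zero_iff (v : Fin m → ℂ) :
    verif H *ᵥ v = 0 ↔ v ∈ Set.range H.mulVec := by
  constructor
  · intro hv
    refine ⟨((Hᴴ * H)⁻¹ * Hᴴ) *ᵥ v, ?_⟩
    rw [verif, sub_mulVec, one_mulVec, sub_eq_zero, Matrix.mul_assoc] at hv
    rwa [mulVec_mulVec]
  · rintro ⟨x, rfl⟩
    rw [mulVec_mulVec, verif_mul_self hH, zero_mulVec]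

theorem isCritical_iff_not_linearIndepOn_verif_col (T : Finset (Fin m)) :
    IsCritical H T ↔ ¬ LinearIndepOn ℂ (verif H).col T := by
  simp_rw [isCritical_iff_exists_mulVec, not_linearIndepOn_col_iff, verif_mulVec_eq_zero_iff hH]
  constructor
  · rintro ⟨x, hx0, hxT⟩
    exact ⟨H *ᵥ x, fun h => hx0 (mulVec_injective_of_rank_eq hH (h.trans (mulVec_zero H).symm)),
      hxT, x, rfl⟩
  · rintro ⟨_, hv0, hvT, x, rfl⟩
    exact ⟨x, fun h => hv0 (h ▸ mulVec_zero H), hvT⟩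

end Verification

theorem stmt18_general {m n : ℕ} (H : Matrix (Fin m) (Fin n) ℂ) (hH : H.rank = n)
    (S : Finset (Fin m)) :
    (colSub (verif H) S).rank = 1 ↔
      (∀ T ⊆ S, T.card = 2 → IsCritical H T) ∧ (∃ i ∈ S, ¬ IsCritical H {i}) := by
  have hcols : Set.range (colSub (verif H) S).col = (verif H).col '' S :=
    (Set.image_eq_range (verif H).col S).symm
  rw [rank_eq_finrank_span_cols, hcols, finrank_span_image_eq_one_iff]
  simp_rw [isCritical_iff_not_linearIndepOn_verif_col hH, Finset.coe_singleton, not_not,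
    linearIndepOn_singleton_iff]

/-- `rank(F^S) = 1` iff every two-element subset of `S` is critical and at least one
one-element subset of `S` is non-critical. -/
theorem stmt18 {m n : ℕ} (H : Matrix (Fin m) (Fin n) ℂ) (hH : H.rank = n)
    (S : Finset (Fin m)) (hS : S.Nonempty) :
    (colSub (verif H) S).rank = 1 ↔
      (∀ T ⊆ S, T.card = 2 → IsCritical H T) ∧ (∃ i ∈ S, ¬ IsCritical H {i}) :=
  stmt18_general H hH S
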